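/- arXiv:1502.04803 — 2 statements merged into one kernel-verified Lean document; each statement's English description precedes it below -/
import Mathlib

section
/- Let G be a graph, C a domination core of G, k a positive integer, and D_s, D_t dominating sets of G of size k. Suppose u and v are distinct vertices of V(G) \ (C ∪ D_s ∪ D_t) with N_G(u) ∩ C = N_G(v) ∩ C. Then u is strongly irrelevant: there exists a reconfiguration sequence from D_s to D_t in G if and only if there exists a reconfiguration sequence from D_s to D_t in the graph G − u obtained by deleting u and its incident edges; moreover, when such sequences exist, the minimum length of a reconfiguration sequence from D_s to D_t in G equals the minimum length of one in G − u. -/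
/-- `D` is a dominating set of the induced subgraph `G[W]`: `D ⊆ W` and every
vertex of `W` is in `D` or adjacent (in `G`) to a vertex of `D`. -/
def DominatesOn {V : Type*} (G : SimpleGraph V) (W D : Finset V) : Prop :=
  D ⊆ W ∧ ∀ w ∈ W, w ∈ D ∨ ∃ u ∈ D, G.Adj u w

/-- `C` is a domination core of `G`: a set `D` is a dominating set of `G` iff
`D` dominates `C`, i.e. `C ⊆ N_G[D]`. -/
def IsDomCore {V : Type*} [Fintype V] (G : SimpleGraph V) (C : Finset V) : Prop :=
  ∀ D : Finset V,
    DominatesOn G Finset.univ D ↔ (∀ c ∈ C, c ∈ D ∨ ∃ u ∈ D, G.Adj u c)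

/-- A reconfiguration sequence of dominating sets (between `Ds` and `Dt`, with
sizes in `{k, k+1}`, consecutive sets differing in exactly one vertex) inside
the induced subgraph `G[W]`, of length `ℓ`, given by `σ 0, σ 1, …, σ ℓ`. -/
def IsDSRecSeqOn {V : Type*} [DecidableEq V] (G : SimpleGraph V) (W : Finset V)
    (k : ℕ) (Ds Dt : Finset V) (ℓ : ℕ) (σ : ℕ → Finset V) : Prop :=
  σ 0 = Ds ∧ σ ℓ = Dt ∧
  (∀ i ≤ ℓ, DominatesOn G W (σ i) ∧ k ≤ (σ i).card ∧ (σ i).card ≤ k + 1) ∧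
  (∀ i < ℓ, (symmDiff (σ i) (σ (i + 1))).card = 1)

open Finset

section DSRAux

variable {V : Type*} [DecidableEq V]

private lemma dsr_card_symmDiff_le_one {A B : Finset V} {w : V}
    (h1 : A ⊆ B) (h2 : B ⊆ insert w A) : (symmDiff A B).card ≤ 1 := by
  have hsub : symmDiff A B ⊆ {w} := by
    intro x hx
    rw [Finset.mem_symmDiff] at hx
    rcases hx with ⟨hxA, hxB⟩ | ⟨hxB, hxA⟩
    · exact absurd (h1 hxA) hxB
    · rcases Finset.mem_insert.mp (h2 hxB) with rfl | hxA'
      · exact Finset.mem_singleton_self x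
      · exact absurd hxA' hxA
  calc (symmDiff A B).card ≤ ({w} : Finset V).card := Finset.card_le_card hsub
    _ = 1 := Finset.card_singleton w

private lemma dsr_symmDiff_cases {A B : Finset V} (h : (symmDiff A B).card = 1) :
    (∃ w, w ∉ A ∧ B = insert w A) ∨ (∃ w, w ∈ A ∧ B = A.erase w) := by
  obtain ⟨w, hw⟩ := Finset.card_eq_one.mp h
  have honly : ∀ x, x ∈ symmDiff A B ↔ x = w := by
    intro x; rw [hw]; exact Finset.mem_singleton
  have hwmem : w ∈ symmDiff A B := (honly w).mpr rfl
  rw [Finset.mem_symmDiff] at hwmem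
  rcases hwmem with ⟨hwA, hwB⟩ | ⟨hwB, hwA⟩
  · right
    refine ⟨w, hwA, ?_⟩
    ext x
    rw [Finset.mem_erase]
    constructor
    · intro hxB
      have hx : x ≠ w := fun h' => hwB (h' ▸ hxB)
      refine ⟨hx, ?_⟩
      by_contra hxA
      exact hx ((honly x).mp (Finset.mem_symmDiff.mpr (Or.inr ⟨hxB, hxA⟩)))
    · rintro ⟨hx, hxA⟩
      by_contra hxB
      exact hx ((honly x).mp (Finset.mem_symmDiff.mpr (Or.inl ⟨hxA, hxB⟩)))
  · left
    refine ⟨w, hwA, ?_⟩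
    ext x
    rw [Finset.mem_insert]
    constructor
    · intro hxB
      by_cases hxA : x ∈ A
      · exact Or.inr hxA
      · exact Or.inl ((honly x).mp (Finset.mem_symmDiff.mpr (Or.inr ⟨hxB, hxA⟩)))
    · rintro (rfl | hxA)
      · exact hwB
      · by_contra hxB
        exact hwA (((honly x).mp (Finset.mem_symmDiff.mpr (Or.inl ⟨hxA, hxB⟩))) ▸ hxA)

/-- Replace `u` by `v` in a finset. -/
private def piuv (u v : V) (D : Finset V) : Finset V :=
  if u ∈ D then insert v (D.erase u) else D

private lemma dsr_notMem_piuv (u v : V) (huv : u ≠ v) (D : Finset V) :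
    u ∉ piuv u v D := by
  unfold piuv
  split
  · intro h
    rcases Finset.mem_insert.mp h with h' | h'
    · exact huv h'
    · exact (Finset.notMem_erase u D) h'
  · assumption

private lemma dsr_piuv_step (u v : V) (huv : u ≠ v) (D : Finset V) (w : V) (hw : w ∉ D) :
    (symmDiff (piuv u v D) (piuv u v (insert w D))).card ≤ 1 := by
  by_cases hwu : w = u
  · have hu : u ∉ D := hwu ▸ hw
    have h1 : piuv u v D = D := if_neg hu
    have h2 : piuv u v (insert w D) = insert v D := by
      rw [hwu]
      unfold piuv
      rw [if_pos (Finset.mem_insert_self u D), Finset.erase_insert hu]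
    rw [h1, h2]
    exact dsr_card_symmDiff_le_one (Finset.subset_insert v D) (Finset.Subset.refl _)
  · by_cases hu : u ∈ D
    · have hu' : u ∈ insert w D := Finset.mem_insert_of_mem hu
      have h1 : piuv u v D = insert v (D.erase u) := if_pos hu
      have h2 : piuv u v (insert w D) = insert v (insert w (D.erase u)) := by
        unfold piuv
        rw [if_pos hu', Finset.erase_insert_of_ne hwu]
      rw [h1, h2]
      by_cases hwv : w = v
      · subst hwv
        rw [Finset.insert_comm, Finset.insert_idem]
        simp
      · rw [Finset.insert_comm]
        exact dsr_card_symmDiff_le_one (Finset.subset_insert _ _) (Finset.Subset.refl _)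
    · have hu' : u ∉ insert w D := by
        intro h
        rcases Finset.mem_insert.mp h with h' | h'
        · exact hwu h'.symm
        · exact hu h'
      rw [piuv, if_neg hu, piuv, if_neg hu']
      exact dsr_card_symmDiff_le_one (Finset.subset_insert _ _) (Finset.Subset.refl _)

private lemma dsr_piuv_insert (u v : V) (huv : u ≠ v) (D : Finset V) (w : V)
    (hu : u ∈ D) (hv : v ∈ D) (hw : w ∉ D) :
    piuv u v (insert w D) = insert w (D.erase u) := by
  have hwu : w ≠ u := fun h => hw (h ▸ hu)
  have hvE : v ∈ D.erase u := Finset.mem_erase.mpr ⟨Ne.symm huv, hv⟩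
  unfold piuv
  rw [if_pos (Finset.mem_insert_of_mem hu), Finset.erase_insert_of_ne hwu,
    Finset.insert_comm, Finset.insert_eq_self.mpr hvE]

/-- Compress a weak sequence (steps of symmetric-difference size at most one)
into a genuine reconfiguration sequence of length at most that of the original. -/
private lemma dsr_compress (G : SimpleGraph V) (W : Finset V) (k : ℕ) (A B : Finset V) :
    ∀ ℓ : ℕ, ∀ σ : ℕ → Finset V, σ 0 = A → σ ℓ = B →
    (∀ i ≤ ℓ, DominatesOn G W (σ i) ∧ k ≤ (σ i).card ∧ (σ i).card ≤ k + 1) →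
    (∀ i < ℓ, (symmDiff (σ i) (σ (i + 1))).card ≤ 1) →
    ∃ ℓ' ≤ ℓ, ∃ τ, IsDSRecSeqOn G W k A B ℓ' τ := by
  intro ℓ
  induction ℓ using Nat.strong_induction_on with
  | _ ℓ IH =>
    intro σ h0 hℓ hval hstep
    by_cases hall : ∀ i < ℓ, (symmDiff (σ i) (σ (i + 1))).card = 1
    · exact ⟨ℓ, le_refl ℓ, σ, h0, hℓ, hval, hall⟩
    · push_neg at hall
      obtain ⟨i, hi, hne⟩ := hall
      have heq : σ i = σ (i + 1) := by
        have h1 := hstep i hi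
        have h2 : (symmDiff (σ i) (σ (i + 1))).card = 0 := by omega
        have h3 : symmDiff (σ i) (σ (i + 1)) = ∅ := Finset.card_eq_zero.mp h2
        exact symmDiff_eq_bot.mp (by simpa using h3)
      have hℓpos : 0 < ℓ := Nat.pos_of_ne_zero (by omega)
      set σ' : ℕ → Finset V := fun j => if j ≤ i then σ j else σ (j + 1) with hσ'
      have hs0 : σ' 0 = A := by simp only [hσ']; rw [if_pos (Nat.zero_le i)]; exact h0
      have hsℓ : σ' (ℓ - 1) = B := by
        simp only [hσ']
        by_cases hcase : ℓ - 1 ≤ i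
        · have : i = ℓ - 1 := by omega
          rw [if_pos hcase, ← this, heq]
          have : i + 1 = ℓ := by omega
          rw [this]; exact hℓ
        · rw [if_neg hcase]
          have : ℓ - 1 + 1 = ℓ := by omega
          rw [this]; exact hℓ
      have hsval : ∀ j ≤ ℓ - 1, DominatesOn G W (σ' j) ∧ k ≤ (σ' j).card ∧ (σ' j).card ≤ k + 1 := by
        intro j hj
        simp only [hσ']
        by_cases hcase : j ≤ i
        · rw [if_pos hcase]; exact hval j (by omega)
        · rw [if_neg hcase]; exact hval (j + 1) (by omega)
      have hsstep : ∀ j < ℓ - 1, (symmDiff (σ' j) (σ' (j + 1))).card ≤ 1 := by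
        intro j hj
        simp only [hσ']
        by_cases h1 : j + 1 ≤ i
        · rw [if_pos (by omega : j ≤ i), if_pos h1]
          exact hstep j (by omega)
        · by_cases h2 : j ≤ i
          · have hji : j = i := by omega
            rw [if_pos h2, if_neg h1, hji, heq]
            exact hstep (i + 1) (by omega)
          · rw [if_neg h2, if_neg h1]
            exact hstep (j + 1) (by omega)
      obtain ⟨ℓ', hℓ', τ, hτ⟩ := IH (ℓ - 1) (by omega) σ' hs0 hsℓ hsval hsstep
      exact ⟨ℓ', by omega, τ, hτ⟩

end DSRAux

section DSRMain

variable {V : Type*} [Fintype V] [DecidableEq V]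

/-- Any reconfiguration sequence in `G - u` is one in `G`, provided `u ∉ C`. -/
private lemma dsr_back (G : SimpleGraph V) (k : ℕ) (C : Finset V) (hC : IsDomCore G C)
    (Ds Dt : Finset V) (u : V) (huC : u ∉ C) (ℓ : ℕ) (σ : ℕ → Finset V)
    (hσ : IsDSRecSeqOn G (Finset.univ.erase u) k Ds Dt ℓ σ) :
    IsDSRecSeqOn G Finset.univ k Ds Dt ℓ σ := by
  obtain ⟨h0, hL, hval, hstep⟩ := hσ
  refine ⟨h0, hL, fun i hi => ?_, hstep⟩
  obtain ⟨⟨hsub, hdom⟩, hc1, hc2⟩ := hval i hi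
  refine ⟨?_, hc1, hc2⟩
  apply (hC (σ i)).mpr
  intro c hc
  have hcu : c ≠ u := fun h => huC (h ▸ hc)
  exact hdom c (Finset.mem_erase.mpr ⟨hcu, Finset.mem_univ c⟩)

private lemma dsr_forward (G : SimpleGraph V) [DecidableRel G.Adj] (k : ℕ) (hk : 0 < k)
    (C : Finset V) (hC : IsDomCore G C) (Ds Dt : Finset V) (u v : V) (huv : u ≠ v)
    (huC : u ∉ C) (huDs : u ∉ Ds) (huDt : u ∉ Dt)
    (hnbr : G.neighborFinset u ∩ C = G.neighborFinset v ∩ C)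
    (ℓ : ℕ) (σ : ℕ → Finset V)
    (hσ : IsDSRecSeqOn G Finset.univ k Ds Dt ℓ σ) :
    ∃ ℓ' ≤ ℓ, ∃ τ, IsDSRecSeqOn G (Finset.univ.erase u) k Ds Dt ℓ' τ := by
  obtain ⟨h0, hL, hval, hstep⟩ := hσ
  -- coverage of C transfers to piuv
  have hcovπ : ∀ D : Finset V, (∀ c ∈ C, c ∈ D ∨ ∃ x ∈ D, G.Adj x c) →
      ∀ c ∈ C, c ∈ piuv u v D ∨ ∃ x ∈ piuv u v D, G.Adj x c := by
    intro D hD c hc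
    have hcu : c ≠ u := fun h => huC (h ▸ hc)
    unfold piuv
    by_cases hu' : u ∈ D
    · rw [if_pos hu']
      rcases hD c hc with hcD | ⟨x, hxD, hadj⟩
      · exact Or.inl (Finset.mem_insert_of_mem (Finset.mem_erase.mpr ⟨hcu, hcD⟩))
      · by_cases hxu : x = u
        · subst hxu
          have h1 : c ∈ G.neighborFinset x ∩ C :=
            Finset.mem_inter.mpr ⟨(G.mem_neighborFinset x c).mpr hadj, hc⟩
          rw [hnbr] at h1
          have h2 : G.Adj v c := (G.mem_neighborFinset v c).mp (Finset.mem_inter.mp h1).1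
          exact Or.inr ⟨v, Finset.mem_insert_self v _, h2⟩
        · exact Or.inr ⟨x, Finset.mem_insert_of_mem (Finset.mem_erase.mpr ⟨hxu, hxD⟩), hadj⟩
    · rw [if_neg hu']
      exact hD c hc
  have hcovσ : ∀ i ≤ ℓ, ∀ c ∈ C, c ∈ σ i ∨ ∃ x ∈ σ i, G.Adj x c :=
    fun i hi => (hC (σ i)).mp (hval i hi).1
  have hdomOf : ∀ D : Finset V, u ∉ D → (∀ c ∈ C, c ∈ D ∨ ∃ x ∈ D, G.Adj x c) →
      DominatesOn G (Finset.univ.erase u) D := by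
    intro D hu' hcov
    have hD : DominatesOn G Finset.univ D := (hC D).mpr hcov
    exact ⟨fun x hx => Finset.mem_erase.mpr ⟨fun h => hu' (h ▸ hx), Finset.mem_univ x⟩,
      fun w _ => hD.2 w (Finset.mem_univ w)⟩
  -- the replacement sequence
  set τ : ℕ → Finset V := fun i =>
    if u ∈ σ i ∧ v ∈ σ i ∧ (σ i).card = k
    then piuv u v (σ (i - 1)) ∪ piuv u v (σ (i + 1))
    else piuv u v (σ i) with hτdef
  -- structure near a "bad" index
  have hbad : ∀ i ≤ ℓ, u ∈ σ i → v ∈ σ i → (σ i).card = k →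
      ∃ w w', w ∉ σ i ∧ w' ∉ σ i ∧ σ (i - 1) = insert w (σ i) ∧
        σ (i + 1) = insert w' (σ i) ∧ 0 < i ∧ i < ℓ ∧
        τ i = insert w (insert w' ((σ i).erase u)) := by
    intro i hi hui hvi hci
    have hi0 : i ≠ 0 := by
      intro h; apply huDs; rw [h, h0] at hui; exact hui
    have hiℓ : i ≠ ℓ := by
      intro h; apply huDt; rw [h, hL] at hui; exact hui
    have hiℓ' : i < ℓ := lt_of_le_of_ne hi hiℓ
    have hstep1 := hstep (i - 1) (by omega)
    have hidx : i - 1 + 1 = i := by omega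
    rw [hidx] at hstep1
    rcases dsr_symmDiff_cases hstep1 with ⟨w, hw, hwi⟩ | ⟨w, hw, hwi⟩
    · exfalso
      have hc1 := (hval (i - 1) (by omega)).2.1
      have : (σ i).card = (σ (i - 1)).card + 1 := by
        rw [hwi]; exact Finset.card_insert_of_notMem hw
      omega
    · have h1 : σ (i - 1) = insert w (σ i) := by rw [hwi, Finset.insert_erase hw]
      have hwσ : w ∉ σ i := by rw [hwi]; exact Finset.notMem_erase w _
      have hstep2 := hstep i hiℓ'
      rcases dsr_symmDiff_cases hstep2 with ⟨w', hw', hwi'⟩ | ⟨w', hw', hwi'⟩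
      · refine ⟨w, w', hwσ, hw', h1, hwi', by omega, hiℓ', ?_⟩
        rw [hτdef]
        simp only
        rw [if_pos ⟨hui, hvi, hci⟩, h1, hwi',
          dsr_piuv_insert u v huv (σ i) w hui hvi hwσ,
          dsr_piuv_insert u v huv (σ i) w' hui hvi hw']
        ext x
        simp only [Finset.mem_union, Finset.mem_insert]
        tauto
      · exfalso
        have hc2 := (hval (i + 1) (by omega)).2.1
        have : (σ (i + 1)).card = (σ i).card - 1 := by
          rw [hwi']; exact Finset.card_erase_of_mem hw'
        omega
  have hτgood : ∀ i, ¬(u ∈ σ i ∧ v ∈ σ i ∧ (σ i).card = k) → τ i = piuv u v (σ i) := by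
    intro i h; rw [hτdef]; simp only; rw [if_neg h]
  -- endpoints
  have hτ0 : τ 0 = Ds := by
    have hnb : ¬(u ∈ σ 0 ∧ v ∈ σ 0 ∧ (σ 0).card = k) := by
      rintro ⟨h', _, _⟩; rw [h0] at h'; exact huDs h'
    rw [hτgood 0 hnb, h0, piuv, if_neg huDs]
  have hτℓ : τ ℓ = Dt := by
    have hnb : ¬(u ∈ σ ℓ ∧ v ∈ σ ℓ ∧ (σ ℓ).card = k) := by
      rintro ⟨h', _, _⟩; rw [hL] at h'; exact huDt h'
    rw [hτgood ℓ hnb, hL, piuv, if_neg huDt]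
  -- validity
  have hτval : ∀ i ≤ ℓ, DominatesOn G (Finset.univ.erase u) (τ i) ∧
      k ≤ (τ i).card ∧ (τ i).card ≤ k + 1 := by
    intro i hi
    by_cases hb : u ∈ σ i ∧ v ∈ σ i ∧ (σ i).card = k
    · obtain ⟨hui, hvi, hci⟩ := hb
      obtain ⟨w, w', hw, hw', h1, h2, hipos, hilt, hτi⟩ := hbad i hi hui hvi hci
      have hsubτ : piuv u v (σ (i - 1)) ⊆ τ i := by
        rw [hτi, h1, dsr_piuv_insert u v huv (σ i) w hui hvi hw]
        exact Finset.insert_subset_insert w (Finset.subset_insert w' _)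
      have hcov1 := hcovπ _ (hcovσ (i - 1) (by omega))
      have hcov : ∀ c ∈ C, c ∈ τ i ∨ ∃ x ∈ τ i, G.Adj x c := by
        intro c hc
        rcases hcov1 c hc with h' | ⟨x, hx, hadj⟩
        · exact Or.inl (hsubτ h')
        · exact Or.inr ⟨x, hsubτ hx, hadj⟩
      have huτ : u ∉ τ i := by
        rw [hτi]
        intro h
        rcases Finset.mem_insert.mp h with h' | h'
        · exact hw (h' ▸ hui)
        · rcases Finset.mem_insert.mp h' with h'' | h''
          · exact hw' (h'' ▸ hui)
          · exact (Finset.notMem_erase u _) h''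
      refine ⟨hdomOf _ huτ hcov, ?_, ?_⟩
      · have hE : ((σ i).erase u).card = k - 1 := by
          rw [Finset.card_erase_of_mem hui, hci]
        have hw'E : w' ∉ (σ i).erase u := fun h => hw' (Finset.mem_of_mem_erase h)
        have h3 : (insert w' ((σ i).erase u)).card = k := by
          rw [Finset.card_insert_of_notMem hw'E, hE]; omega
        rw [hτi]
        calc k = (insert w' ((σ i).erase u)).card := h3.symm
          _ ≤ (insert w (insert w' ((σ i).erase u))).card :=
              Finset.card_le_card (Finset.subset_insert _ _)
      · have hE : ((σ i).erase u).card = k - 1 := by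
          rw [Finset.card_erase_of_mem hui, hci]
        have hw'E : w' ∉ (σ i).erase u := fun h => hw' (Finset.mem_of_mem_erase h)
        have h3 : (insert w' ((σ i).erase u)).card = k := by
          rw [Finset.card_insert_of_notMem hw'E, hE]; omega
        rw [hτi]
        calc (insert w (insert w' ((σ i).erase u))).card
            ≤ (insert w' ((σ i).erase u)).card + 1 := Finset.card_insert_le _ _
          _ = k + 1 := by rw [h3]
    · have hτi : τ i = piuv u v (σ i) := hτgood i hb
      have hcov := hcovπ _ (hcovσ i hi)
      refine ⟨hdomOf _ (hτi ▸ dsr_notMem_piuv u v huv (σ i)) (hτi ▸ hcov), ?_⟩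
      have hcard := (hval i hi).2
      rw [hτi]
      unfold piuv
      by_cases hui : u ∈ σ i
      · rw [if_pos hui]
        by_cases hvi : v ∈ σ i
        · have hvE : v ∈ (σ i).erase u := Finset.mem_erase.mpr ⟨Ne.symm huv, hvi⟩
          rw [Finset.insert_eq_self.mpr hvE, Finset.card_erase_of_mem hui]
          have hck : (σ i).card ≠ k := fun h => hb ⟨hui, hvi, h⟩
          omega
        · have hvE : v ∉ (σ i).erase u := fun h => hvi (Finset.mem_of_mem_erase h)
          rw [Finset.card_insert_of_notMem hvE, Finset.card_erase_of_mem hui]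
          have hpos : 0 < (σ i).card := Finset.card_pos.mpr ⟨u, hui⟩
          omega
      · rw [if_neg hui]; exact hcard
  -- weak steps
  have hτstep : ∀ i < ℓ, (symmDiff (τ i) (τ (i + 1))).card ≤ 1 := by
    intro i hi
    by_cases hbi : u ∈ σ i ∧ v ∈ σ i ∧ (σ i).card = k
    · obtain ⟨hui, hvi, hci⟩ := hbi
      obtain ⟨w, w', hw, hw', h1, h2, hipos, hilt, hτi⟩ := hbad i (le_of_lt hi) hui hvi hci
      have hbj : ¬(u ∈ σ (i + 1) ∧ v ∈ σ (i + 1) ∧ (σ (i + 1)).card = k) := by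
        rintro ⟨_, _, hcj⟩
        have : (σ (i + 1)).card = k + 1 := by
          rw [h2, Finset.card_insert_of_notMem hw', hci]
        omega
      have hτj : τ (i + 1) = insert w' ((σ i).erase u) := by
        rw [hτgood (i + 1) hbj, h2, dsr_piuv_insert u v huv (σ i) w' hui hvi hw']
      rw [hτi, hτj, symmDiff_comm]
      exact dsr_card_symmDiff_le_one (Finset.subset_insert _ _) (Finset.Subset.refl _)
    · by_cases hbj : u ∈ σ (i + 1) ∧ v ∈ σ (i + 1) ∧ (σ (i + 1)).card = k
      · obtain ⟨huj, hvj, hcj⟩ := hbj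
        obtain ⟨w, w', hw, hw', h1, h2, hjpos, hjlt, hτj⟩ :=
          hbad (i + 1) (by omega) huj hvj hcj
        have h1' : σ i = insert w (σ (i + 1)) := by simpa using h1
        have hτi2 : τ i = insert w ((σ (i + 1)).erase u) := by
          rw [hτgood i hbi, h1', dsr_piuv_insert u v huv (σ (i + 1)) w huj hvj hw]
        rw [hτi2, hτj]
        refine dsr_card_symmDiff_le_one (w := w')
          (Finset.insert_subset_insert w (Finset.subset_insert w' _)) ?_
        rw [Finset.insert_comm w w']
      · have hτi2 : τ i = piuv u v (σ i) := hτgood i hbi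
        have hτj2 : τ (i + 1) = piuv u v (σ (i + 1)) := hτgood (i + 1) hbj
        rw [hτi2, hτj2]
        rcases dsr_symmDiff_cases (hstep i hi) with ⟨w, hw, hwi⟩ | ⟨w, hw, hwi⟩
        · rw [hwi]
          exact dsr_piuv_step u v huv (σ i) w hw
        · rw [hwi, symmDiff_comm]
          have hstep' := dsr_piuv_step u v huv ((σ i).erase w) w (Finset.notMem_erase w _)
          rwa [Finset.insert_erase hw] at hstep'
  exact dsr_compress G (Finset.univ.erase u) k Ds Dt ℓ τ hτ0 hτℓ hτval hτstep

end DSRMain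

/-- If `u, v` are distinct vertices outside `C ∪ D_s ∪ D_t` with the same
neighborhood in the domination core `C`, then `u` is strongly irrelevant: there
is a reconfiguration sequence from `D_s` to `D_t` in `G` iff there is one in
`G - u`, and when such sequences exist the minimum lengths coincide. -/
theorem dsr_strongly_irrelevant {V : Type*} [Fintype V] [DecidableEq V]
    (G : SimpleGraph V) [DecidableRel G.Adj] (k : ℕ) (hk : 0 < k)
    (C : Finset V) (hC : IsDomCore G C)
    (Ds Dt : Finset V)
    (hDs : DominatesOn G Finset.univ Ds) (hDt : DominatesOn G Finset.univ Dt)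
    (hDsCard : Ds.card = k) (hDtCard : Dt.card = k)
    (u v : V) (huv : u ≠ v)
    (hu : u ∉ C ∪ Ds ∪ Dt) (hv : v ∉ C ∪ Ds ∪ Dt)
    (hnbr : G.neighborFinset u ∩ C = G.neighborFinset v ∩ C) :
    ((∃ ℓ σ, IsDSRecSeqOn G Finset.univ k Ds Dt ℓ σ) ↔
     (∃ ℓ σ, IsDSRecSeqOn G (Finset.univ.erase u) k Ds Dt ℓ σ)) ∧
    ((∃ ℓ σ, IsDSRecSeqOn G Finset.univ k Ds Dt ℓ σ) →
      sInf {ℓ : ℕ | ∃ σ, IsDSRecSeqOn G Finset.univ k Ds Dt ℓ σ} =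
      sInf {ℓ : ℕ | ∃ σ, IsDSRecSeqOn G (Finset.univ.erase u) k Ds Dt ℓ σ}) := by
  simp only [Finset.mem_union, not_or] at hu
  obtain ⟨⟨huC, huDs⟩, huDt⟩ := hu
  have hfwd : ∀ ℓ σ, IsDSRecSeqOn G Finset.univ k Ds Dt ℓ σ →
      ∃ ℓ' ≤ ℓ, ∃ τ, IsDSRecSeqOn G (Finset.univ.erase u) k Ds Dt ℓ' τ :=
    fun ℓ σ h => dsr_forward G k hk C hC Ds Dt u v huv huC huDs huDt hnbr ℓ σ h
  have hback : ∀ ℓ σ, IsDSRecSeqOn G (Finset.univ.erase u) k Ds Dt ℓ σ →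
      IsDSRecSeqOn G Finset.univ k Ds Dt ℓ σ :=
    fun ℓ σ h => dsr_back G k C hC Ds Dt u huC ℓ σ h
  constructor
  · constructor
    · rintro ⟨ℓ, σ, hσ⟩
      obtain ⟨ℓ', _, τ, hτ⟩ := hfwd ℓ σ hσ
      exact ⟨ℓ', τ, hτ⟩
    · rintro ⟨ℓ, σ, hσ⟩
      exact ⟨ℓ, σ, hback ℓ σ hσ⟩
  · rintro ⟨ℓ, σ, hσ⟩
    set S : Set ℕ := {ℓ : ℕ | ∃ σ, IsDSRecSeqOn G Finset.univ k Ds Dt ℓ σ} with hS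
    set T : Set ℕ := {ℓ : ℕ | ∃ σ, IsDSRecSeqOn G (Finset.univ.erase u) k Ds Dt ℓ σ} with hT
    have hSne : S.Nonempty := ⟨ℓ, σ, hσ⟩
    have hSmem : sInf S ∈ S := Nat.sInf_mem hSne
    obtain ⟨σ₀, hσ₀⟩ := hSmem
    obtain ⟨ℓ', hℓ', τ, hτ⟩ := hfwd (sInf S) σ₀ hσ₀
    have hTne : T.Nonempty := ⟨ℓ', τ, hτ⟩
    have h1 : sInf T ≤ sInf S := le_trans (Nat.sInf_le ⟨τ, hτ⟩) hℓ'
    have h2 : sInf S ≤ sInf T := by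
      have hTmem : sInf T ∈ T := Nat.sInf_mem hTne
      obtain ⟨τ', hτ'⟩ := hTmem
      exact Nat.sInf_le ⟨τ', hback _ τ' hτ'⟩
    omega
end

section
/- Let d ≥ 2 and k ≥ 1, let G be a graph that excludes K_{d,d} as a subgraph, and let D_s, D_t be dominating sets of G with |D_s| = |D_t| = k. Then there exists a vertex set W ⊆ V(G) with D_s ∪ D_t ⊆ W and |W| ≤ d·k^d + 2k + 2d·(3·d·k^d)^{2d} such that there is a reconfiguration sequence from D_s to D_t in G if and only if there is a reconfiguration sequence from D_s to D_t in the induced subgraph G[W]; moreover, when such sequences exist, the minimum length of a reconfiguration sequence from D_s to D_t in G equals that in G[W]. -/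
/-- `G` excludes `K_{d,d}` as a subgraph: there are no disjoint vertex sets
`A`, `B`, each of size `d`, with every vertex of `A` adjacent to every vertex
of `B`. -/
def BicliqueFree {V : Type*} (G : SimpleGraph V) (d : ℕ) : Prop :=
  ¬ ∃ A B : Finset V, Disjoint A B ∧ A.card = d ∧ B.card = d ∧
      ∀ a ∈ A, ∀ b ∈ B, G.Adj a b

open Finset

section Aux

lemma symmDiff_card_one_aux {V : Type*} [DecidableEq V] {A B : Finset V}
    (h : (symmDiff A B).card = 1) :
    (∃ x, x ∉ A ∧ B = insert x A) ∨ (∃ x, x ∈ A ∧ B = A.erase x) := by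
  rw [symmDiff_def, Finset.sup_eq_union] at h
  rcases Finset.card_eq_one.mp h with ⟨x, hx⟩
  have hxu : x ∈ A \ B ∪ B \ A := hx ▸ mem_singleton_self x
  have hsub : ∀ y, y ∈ A \ B ∪ B \ A → y = x := fun y hy => mem_singleton.mp (hx ▸ hy)
  by_cases hmem : x ∈ A
  · right
    have hxAB : x ∈ A \ B := by
      rcases mem_union.mp hxu with h1 | h1
      · exact h1
      · exact absurd hmem (mem_sdiff.mp h1).2
    refine ⟨x, hmem, ?_⟩
    ext y
    simp only [mem_erase]
    constructor
    · intro hyB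
      have hyA : y ∈ A := by
        by_contra hyA
        have : y = x := hsub y (mem_union.mpr (Or.inr (mem_sdiff.mpr ⟨hyB, hyA⟩)))
        exact hyA (this ▸ hmem)
      refine ⟨fun he => (mem_sdiff.mp hxAB).2 (he ▸ hyB), hyA⟩
    · rintro ⟨hne, hyA⟩
      by_contra hyB
      exact hne (hsub y (mem_union.mpr (Or.inl (mem_sdiff.mpr ⟨hyA, hyB⟩))))
  · left
    have hxBA : x ∈ B \ A := by
      rcases mem_union.mp hxu with h1 | h1
      · exact absurd (mem_sdiff.mp h1).1 hmem
      · exact h1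
    refine ⟨x, hmem, ?_⟩
    ext y
    simp only [mem_insert]
    constructor
    · intro hyB
      by_cases hyA : y ∈ A
      · exact Or.inr hyA
      · exact Or.inl (hsub y (mem_union.mpr (Or.inr (mem_sdiff.mpr ⟨hyB, hyA⟩))))
    · rintro (rfl | hyA)
      · exact (mem_sdiff.mp hxBA).1
      · by_contra hyB
        exact hmem ((hsub y (mem_union.mpr (Or.inl (mem_sdiff.mpr ⟨hyA, hyB⟩)))) ▸ hyA)

lemma card_symmDiff_insert_aux {V : Type*} [DecidableEq V] {A : Finset V} {x : V}
    (hx : x ∉ A) : (symmDiff A (insert x A)).card = 1 := by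
  rw [symmDiff_def, Finset.sup_eq_union]
  have h1 : A \ insert x A = ∅ := sdiff_eq_empty_iff_subset.mpr (subset_insert x A)
  have h2 : insert x A \ A = {x} := by
    ext y
    simp only [mem_sdiff, mem_insert, mem_singleton]
    constructor
    · rintro ⟨rfl | hyA, hyA'⟩
      · rfl
      · exact absurd hyA hyA'
    · rintro rfl; exact ⟨Or.inl rfl, hx⟩
  rw [h1, h2]
  simp

lemma card_symmDiff_erase_aux {V : Type*} [DecidableEq V] {A : Finset V} {x : V}
    (hx : x ∈ A) : (symmDiff A (A.erase x)).card = 1 := by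
  rw [symmDiff_def, Finset.sup_eq_union]
  have h2 : A.erase x \ A = ∅ := sdiff_eq_empty_iff_subset.mpr (erase_subset x A)
  have h1 : A \ A.erase x = {x} := by
    ext y
    simp only [mem_sdiff, mem_erase, mem_singleton]
    constructor
    · rintro ⟨hyA, hy⟩
      by_contra hne
      exact hy ⟨hne, hyA⟩
    · rintro rfl; exact ⟨hx, fun h => h.1 rfl⟩
  rw [h1, h2]
  simp

/-- the recurrence controlling witness-chain lengths -/
def hfunAux (d k : ℕ) : ℕ → ℕ
  | 0 => d
  | s + 1 => k * hfunAux d k s + k + 1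

lemma hfunAux_le (d k : ℕ) (hd : 2 ≤ d) (hk : 1 ≤ k) :
    hfunAux d k d ≤ (d + 3) * k ^ d + 2 * d := by
  rcases eq_or_lt_of_le hk with hk1 | hk2
  · have hk1 : k = 1 := hk1.symm
    subst hk1
    have key : ∀ s, hfunAux d 1 s = d + 2 * s := by
      intro s
      induction s with
      | zero => rfl
      | succ s ih => show 1 * hfunAux d 1 s + 1 + 1 = _; rw [ih]; ring
    rw [key d, one_pow]
    omega
  · have hk2 : 2 ≤ k := hk2
    have key : ∀ s, hfunAux d k s + 3 ≤ (d + 3) * k ^ s := by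
      intro s
      induction s with
      | zero => show d + 3 ≤ (d + 3) * k ^ 0; simp
      | succ s ih =>
        show k * hfunAux d k s + k + 1 + 3 ≤ (d + 3) * k ^ (s + 1)
        have h1 : k * (hfunAux d k s + 3) ≤ k * ((d + 3) * k ^ s) :=
          Nat.mul_le_mul_left k ih
        have h2 : k * ((d + 3) * k ^ s) = (d + 3) * k ^ (s + 1) := by ring
        have h3 : k * (hfunAux d k s + 3) = k * hfunAux d k s + 3 * k := by ring
        omega
    have := key d
    omega

lemma kernel_arith_aux (d k m : ℕ) (hd : 2 ≤ d) (hk : 1 ≤ k)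
    (hm : m ≤ 2 * k + ((d + 3) * k ^ d + 2 * d)) :
    m + (2 * d + 1) * (m + 1) ^ d + (k + 2)
      ≤ d * k ^ d + 2 * k + 2 * d * (3 * d * k ^ d) ^ (2 * d) := by
  set K := k ^ d with hK
  have hK1 : 1 ≤ K := Nat.one_le_pow _ _ hk
  have hkK : k ≤ K := Nat.le_self_pow (by omega) k
  have hdd4 : 4 ≤ d * d := by
    calc 4 = 2 * 2 := rfl
      _ ≤ d * d := Nat.mul_le_mul hd hd
  have hb : m + 1 ≤ (3 * d + 6) * K := by
    have e1 : m + 1 ≤ 2 * k + (d + 3) * K + (2 * d + 1) := by omega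
    have e2 : 2 * k ≤ 2 * K := by omega
    have e3 : 2 * d + 1 ≤ (2 * d + 1) * K := Nat.le_mul_of_pos_right _ hK1
    have e4 : 2 * K + (d + 3) * K + (2 * d + 1) * K = (3 * d + 6) * K := by ring
    omega
  have hc : (2 * d + 1) * (m + 1) ^ d ≤ d * (3 * d * K) ^ (2 * d) := by
    have c1 : (2 * d + 1) * (m + 1) ^ d ≤ (3 * d) * ((3 * d + 6) * K) ^ d :=
      Nat.mul_le_mul (by omega) (Nat.pow_le_pow_left hb d)
    have c2 : (3 * d) * ((3 * d + 6) * K) ^ d ≤ (3 * d) * ((6 * d) * K) ^ d := by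
      refine Nat.mul_le_mul_left _ (Nat.pow_le_pow_left ?_ d)
      exact Nat.mul_le_mul_right K (by omega)
    have c3 : (3 * d) * ((6 * d) * K) ^ d ≤ d * (18 * d * K) ^ d := by
      have e1 : (18 * d * K) ^ d = 3 ^ d * ((6 * d) * K) ^ d := by
        rw [← mul_pow]; ring_nf
      have e2 : 3 ≤ 3 ^ d := by
        calc 3 = 3 ^ 1 := (pow_one 3).symm
          _ ≤ 3 ^ d := Nat.pow_le_pow_right (by omega) (by omega)
      calc (3 * d) * ((6 * d) * K) ^ d = d * (3 * ((6 * d) * K) ^ d) := by ring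
        _ ≤ d * (3 ^ d * ((6 * d) * K) ^ d) :=
            Nat.mul_le_mul_left d (Nat.mul_le_mul_right _ e2)
        _ = d * (18 * d * K) ^ d := by rw [e1]
    have c4 : d * (18 * d * K) ^ d ≤ d * (3 * d * K) ^ (2 * d) := by
      refine Nat.mul_le_mul_left d ?_
      have e2 : 18 * d * K ≤ (3 * d * K) ^ 2 := by
        have e3 : (3 * d * K) ^ 2 = (9 * (d * K)) * (d * K) := by ring
        have e4 : 18 * d * K = 18 * (d * K) := by ring
        have e5 : 2 ≤ d * K := by
          calc 2 = 2 * 1 := rfl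
            _ ≤ d * K := Nat.mul_le_mul hd hK1
        have e6 : 18 * (d * K) ≤ (9 * (d * K)) * (d * K) := by
          calc 18 * (d * K) = (9 * 2) * (d * K) := by ring
            _ ≤ (9 * (d * K)) * (d * K) :=
              Nat.mul_le_mul_right _ (Nat.mul_le_mul_left 9 e5)
        omega
      calc (18 * d * K) ^ d ≤ ((3 * d * K) ^ 2) ^ d := Nat.pow_le_pow_left e2 d
        _ = (3 * d * K) ^ (2 * d) := by rw [← pow_mul]
    omega
  have hdd : m + (k + 2) ≤ d * K + 2 * k + d * (3 * d * K) ^ (2 * d) := by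
    have d1 : d * (3 * d * K) ^ 2 ≤ d * (3 * d * K) ^ (2 * d) := by
      refine Nat.mul_le_mul_left d (Nat.pow_le_pow_right ?_ (by omega))
      have : 1 * 1 * 1 ≤ 3 * d * K := Nat.mul_le_mul (Nat.mul_le_mul (by omega) (by omega)) hK1
      omega
    have d2 : k + 3 * K + 2 * d + 2 ≤ d * (3 * d * K) ^ 2 := by
      have a2 : 2 ≤ d * (K * K) := by
        calc 2 = 2 * (1 * 1) := rfl
          _ ≤ d * (K * K) := Nat.mul_le_mul hd (Nat.mul_le_mul hK1 hK1)
      have aK : K ≤ d * (K * K) := by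
        calc K = 1 * (1 * K) := by ring
          _ ≤ d * (K * K) := Nat.mul_le_mul (by omega) (Nat.mul_le_mul hK1 le_rfl)
      have ak : k ≤ d * (K * K) := le_trans hkK aK
      have ad : d ≤ d * (K * K) := Nat.le_mul_of_pos_right d (by positivity)
      have e : d * (3 * d * K) ^ 2 = (9 * (d * d)) * (d * (K * K)) := by ring
      have e8 : 8 * (d * (K * K)) ≤ (9 * (d * d)) * (d * (K * K)) :=
        Nat.mul_le_mul_right _ (by omega)
      omega
    have e : (d + 3) * K = d * K + 3 * K := by ring
    omega
  have efin : 2 * d * (3 * d * K) ^ (2 * d)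
      = d * (3 * d * K) ^ (2 * d) + d * (3 * d * K) ^ (2 * d) := by ring
  omega

lemma chain_bound_aux {V : Type*} [DecidableEq V] (G : SimpleGraph V) [DecidableRel G.Adj]
    (d k : ℕ) (hfree : BicliqueFree G d)
    (n : ℕ) (u : ℕ → V) (D : ℕ → Finset V)
    (hcard : ∀ i < n, (D i).card ≤ k)
    (hcov : ∀ i < n, ∀ j < i, u j ∈ D i ∨ ∃ x ∈ D i, G.Adj x (u j))
    (hmiss : ∀ i < n, ¬ (u i ∈ D i ∨ ∃ x ∈ D i, G.Adj x (u i))) :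
    n ≤ hfunAux d k d := by
  by_contra hn
  push_neg at hn
  have hn' : hfunAux d k d + 1 ≤ n := hn
  have hinj : ∀ i < n, ∀ j < n, i ≠ j → u i ≠ u j := by
    have key : ∀ i < n, ∀ j < i, u j ≠ u i := by
      intro i hi j hj heq
      exact hmiss i hi (heq ▸ hcov i hi j hj)
    intro i hi j hj hne heq
    rcases Nat.lt_or_ge i j with h | h
    · exact key j hj i h heq
    · exact key i hi j (lt_of_le_of_ne h (Ne.symm hne)) heq.symm
  have claim : ∀ t ≤ d, ∃ (X : Finset V) (I : Finset ℕ),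
      X.card = t ∧ (∀ i ∈ I, i < n) ∧ hfunAux d k (d - t) + 1 ≤ I.card ∧
      ∀ x ∈ X, ∀ i ∈ I, G.Adj x (u i) := by
    intro t
    induction t with
    | zero =>
      intro _
      refine ⟨∅, Finset.range (hfunAux d k d + 1), card_empty, ?_, ?_, by simp⟩
      · intro i hi
        exact lt_of_lt_of_le (mem_range.mp hi) hn'
      · simp
    | succ t ih =>
      intro ht
      obtain ⟨X, I, hX, hIn, hIcard, hadj⟩ := ih (le_of_lt ht)
      have hdt : d - t = (d - (t + 1)) + 1 := by omega
      set h' := hfunAux d k (d - (t + 1)) with hh'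
      have hrec : hfunAux d k (d - t) = k * h' + k + 1 := by rw [hdt]; rfl
      rw [hrec] at hIcard
      have hIne : I.Nonempty := card_pos.mp (by omega)
      set j := I.max' hIne with hj
      have hjI : j ∈ I := I.max'_mem hIne
      have hjn : j < n := hIn j hjI
      set Ie := I.erase j with hIe
      have hIecard : k * h' + k + 1 ≤ Ie.card := by
        have h5 : Ie.card = I.card - 1 := card_erase_of_mem hjI
        omega
      have hcover : ∀ i ∈ Ie, ∃ x ∈ D j, x = u i ∨ G.Adj x (u i) := by
        intro i hi
        have hiI : i ∈ I := mem_of_mem_erase hi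
        have hij : i < j := lt_of_le_of_ne (I.le_max' i hiI) (ne_of_mem_erase hi)
        rcases hcov j hjn i hij with h1 | ⟨x, hx, hadjx⟩
        · exact ⟨u i, h1, Or.inl rfl⟩
        · exact ⟨x, hx, Or.inr hadjx⟩
      have hpig : ∃ x ∈ D j, h' + 2 ≤ (Ie.filter (fun i => x = u i ∨ G.Adj x (u i))).card := by
        by_contra hc
        push_neg at hc
        have hsub : Ie ⊆ (D j).biUnion (fun x => Ie.filter (fun i => x = u i ∨ G.Adj x (u i))) := by
          intro i hi
          rcases hcover i hi with ⟨x, hx, hxi⟩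
          exact mem_biUnion.mpr ⟨x, hx, mem_filter.mpr ⟨hi, hxi⟩⟩
        have h1 : Ie.card ≤ ∑ x ∈ D j, (Ie.filter (fun i => x = u i ∨ G.Adj x (u i))).card :=
          le_trans (card_le_card hsub) card_biUnion_le
        have h2 : ∑ x ∈ D j, (Ie.filter (fun i => x = u i ∨ G.Adj x (u i))).card
            ≤ (D j).card * (h' + 1) := by
          rw [← smul_eq_mul, ← Finset.sum_const]
          exact Finset.sum_le_sum (fun x hx => Nat.lt_succ_iff.mp (hc x hx))
        have h3 : (D j).card * (h' + 1) ≤ k * (h' + 1) :=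
          Nat.mul_le_mul_right _ (hcard j hjn)
        have h4 : k * (h' + 1) = k * h' + k := by ring
        omega
      obtain ⟨x, hxDj, hxcard⟩ := hpig
      set A := Ie.filter (fun i => x = u i ∨ G.Adj x (u i)) with hA
      have hAI : A ⊆ I := Subset.trans (filter_subset _ _) (erase_subset _ _)
      have hAn : ∀ i ∈ A, i < n := fun i hi => hIn i (hAI hi)
      set I' := A.filter (fun i => ¬ (x = u i)) with hI'
      have hone : (A.filter (fun i => x = u i)).card ≤ 1 := by
        refine card_le_one.mpr ?_
        intro a ha b hb
        have ha' := (mem_filter.mp ha).2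
        have hb' := (mem_filter.mp hb).2
        by_contra hne
        exact hinj a (hAn a (mem_filter.mp ha).1) b (hAn b (mem_filter.mp hb).1) hne
          (ha' ▸ hb')
      have hI'card : h' + 1 ≤ I'.card := by
        have hsplit : (A.filter (fun i => x = u i)).card + I'.card = A.card :=
          Finset.card_filter_add_card_filter_not (p := fun i => x = u i)
        omega
      have hxX : x ∉ X := by
        intro hxX
        have : G.Adj x (u j) := hadj x hxX j hjI
        exact hmiss j hjn (Or.inr ⟨x, hxDj, this⟩)
      refine ⟨insert x X, I', ?_, ?_, ?_, ?_⟩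
      · rw [card_insert_of_notMem hxX, hX]
      · intro i hi
        exact hAn i (mem_filter.mp hi).1
      · exact hI'card
      · intro y hy i hi
        rcases mem_insert.mp hy with rfl | hyX
        · have h1 := (mem_filter.mp (mem_filter.mp hi).1).2
          have h2 := (mem_filter.mp hi).2
          tauto
        · exact hadj y hyX i (hAI (mem_filter.mp hi).1)
  obtain ⟨X, I, hX, hIn, hIcard, hadj⟩ := claim d le_rfl
  have hd0 : hfunAux d k (d - d) = d := by simp [hfunAux]
  have hIcard' : d ≤ I.card := by omega
  obtain ⟨I'', hI''I, hI''card⟩ := Finset.exists_subset_card_eq hIcard'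
  have hinj'' : Set.InjOn u I'' := by
    intro a ha b hb heq
    by_contra hne
    exact hinj a (hIn a (hI''I ha)) b (hIn b (hI''I hb)) hne heq
  refine hfree ⟨X, I''.image u, ?_, hX, ?_, ?_⟩
  · rw [Finset.disjoint_left]
    intro a haX haB
    obtain ⟨i, hi, rfl⟩ := Finset.mem_image.mp haB
    exact G.irrefl (hadj _ haX i (hI''I hi))
  · rw [Finset.card_image_of_injOn hinj'', hI''card]
  · intro a haX b hbB
    obtain ⟨i, hi, rfl⟩ := Finset.mem_image.mp hbB
    exact hadj a haX i (hI''I hi)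

lemma core_exists_aux {V : Type*} [Fintype V] [DecidableEq V] (G : SimpleGraph V)
    [DecidableRel G.Adj] (d k : ℕ) (hfree : BicliqueFree G d) (C₀ : Finset V) :
    ∃ C : Finset V, C₀ ⊆ C ∧ C.card ≤ C₀.card + hfunAux d k d ∧
      ∀ D : Finset V, D.card ≤ k → (∀ c ∈ C, c ∈ D ∨ ∃ x ∈ D, G.Adj x c) →
        ∀ v : V, v ∈ D ∨ ∃ x ∈ D, G.Adj x v := by
  classical
  rcases isEmpty_or_nonempty V with hV | hV
  · refine ⟨C₀, Subset.rfl, Nat.le_add_right _ _, fun D _ _ v => (IsEmpty.false v).elim⟩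
  · set P : ℕ → Prop := fun n => ∃ (u : ℕ → V) (D : ℕ → Finset V),
      (∀ i < n, (D i).card ≤ k) ∧
      (∀ i < n, ∀ j < i, u j ∈ D i ∨ ∃ x ∈ D i, G.Adj x (u j)) ∧
      (∀ i < n, ¬ (u i ∈ D i ∨ ∃ x ∈ D i, G.Adj x (u i))) with hP
    have hP0 : P 0 := by
      refine ⟨fun _ => Classical.arbitrary V, fun _ => ∅, ?_, ?_, ?_⟩ <;>
        intro i hi <;> exact absurd hi (Nat.not_lt_zero i)
    have hPbound : ∀ n, P n → n ≤ hfunAux d k d := by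
      rintro n ⟨u, D, h1, h2, h3⟩
      exact chain_bound_aux G d k hfree n u D h1 h2 h3
    set nstar := Nat.findGreatest P (hfunAux d k d) with hnstar
    have hPn : P nstar := Nat.findGreatest_spec (Nat.zero_le _) hP0
    have hnotP : ¬ P (nstar + 1) := by
      intro hsucc
      have hle : nstar + 1 ≤ hfunAux d k d := hPbound _ hsucc
      exact absurd hsucc (Nat.findGreatest_is_greatest (Nat.lt_succ_self _) hle)
    obtain ⟨u, D, hDcard, hDcov, hDmiss⟩ := hPn
    refine ⟨C₀ ∪ (Finset.range nstar).image u, subset_union_left, ?_, ?_⟩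
    · calc (C₀ ∪ (Finset.range nstar).image u).card
          ≤ C₀.card + ((Finset.range nstar).image u).card := card_union_le _ _
        _ ≤ C₀.card + nstar := by
            have := Finset.card_image_le (s := Finset.range nstar) (f := u)
            simp only [card_range] at this
            omega
        _ ≤ C₀.card + hfunAux d k d := by
            have := Nat.findGreatest_le (P := P) (hfunAux d k d)
            omega
    · intro D' hD'card hD'dom v
      by_contra hv
      push_neg at hv
      apply hnotP
      refine ⟨fun i => if i = nstar then v else u i,
        fun i => if i = nstar then D' else D i, ?_, ?_, ?_⟩
      · intro i hi
        by_cases h : i = nstar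
        · simpa [h] using hD'card
        · have : i < nstar := by omega
          simpa [h] using hDcard i this
      · intro i hi j hj
        by_cases h : i = nstar
        · subst h
          have hj' : j ≠ nstar := by omega
          have huj : u j ∈ C₀ ∪ (Finset.range nstar).image u := by
            apply mem_union_right
            exact mem_image_of_mem u (mem_range.mpr (by omega))
          have := hD'dom (u j) huj
          simpa [if_neg hj'] using this
        · have hi' : i < nstar := by omega
          have hj' : j ≠ nstar := by omega
          simpa [h, hj'] using hDcov i hi' j hj
      · intro i hi
        by_cases h : i = nstar
        · subst h
          simp only [if_pos rfl]
          rintro (h1 | ⟨x, hx, hadj⟩)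
          · exact hv.1 h1
          · exact hv.2 x hx hadj
        · have : i < nstar := by omega
          simpa [h] using hDmiss i this

lemma fat_bound_aux {V : Type*} [Fintype V] [DecidableEq V] (G : SimpleGraph V)
    [DecidableRel G.Adj] (d : ℕ) (hd : 1 ≤ d) (hfree : BicliqueFree G d) (M : Finset V) :
    ((univ : Finset V).filter
      (fun v => d + 1 ≤ (M.filter (fun c => c = v ∨ G.Adj v c)).card)).card
      ≤ d * (M.card + 1) ^ d := by
  classical
  set Fat := (univ : Finset V).filter
    (fun v => d + 1 ≤ (M.filter (fun c => c = v ∨ G.Adj v c)).card) with hFat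
  have hclass : ∀ S ∈ M.powersetCard d,
      ((univ : Finset V).filter (fun v => ∀ c ∈ S, G.Adj v c)).card ≤ d - 1 := by
    intro S hS
    obtain ⟨hSM, hScard⟩ := mem_powersetCard.mp hS
    by_contra hc
    push_neg at hc
    have hc' : d ≤ ((univ : Finset V).filter (fun v => ∀ c ∈ S, G.Adj v c)).card := by omega
    obtain ⟨A, hAsub, hAcard⟩ := Finset.exists_subset_card_eq hc'
    refine hfree ⟨A, S, ?_, hAcard, hScard, ?_⟩
    · rw [Finset.disjoint_left]
      intro a haA haS
      exact G.irrefl ((mem_filter.mp (hAsub haA)).2 a haS)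
    · intro a haA b hbS
      exact (mem_filter.mp (hAsub haA)).2 b hbS
  have hsub : Fat ⊆ (M.powersetCard d).biUnion
      (fun S => (univ : Finset V).filter (fun v => ∀ c ∈ S, G.Adj v c)) := by
    intro v hv
    have hv' := (mem_filter.mp hv).2
    set T := (M.filter (fun c => c = v ∨ G.Adj v c)).erase v with hT
    have hTcard : d ≤ T.card := by
      by_cases hvm : v ∈ M.filter (fun c => c = v ∨ G.Adj v c)
      · have h5 : T.card = (M.filter (fun c => c = v ∨ G.Adj v c)).card - 1 :=
          card_erase_of_mem hvm
        omega
      · have h5 : T = M.filter (fun c => c = v ∨ G.Adj v c) := erase_eq_of_notMem hvm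
        have h6 := congrArg Finset.card h5
        omega
    obtain ⟨S, hST, hScard⟩ := Finset.exists_subset_card_eq hTcard
    refine mem_biUnion.mpr ⟨S, ?_, ?_⟩
    · exact mem_powersetCard.mpr
        ⟨Subset.trans hST (Subset.trans (erase_subset _ _) (filter_subset _ _)), hScard⟩
    · refine mem_filter.mpr ⟨mem_univ _, fun c hc => ?_⟩
      have hcT := hST hc
      have h1 : c ≠ v := ne_of_mem_erase hcT
      have h2 := (mem_filter.mp (mem_of_mem_erase hcT)).2
      rcases h2 with h2 | h2
      · exact absurd h2 h1
      · exact h2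
  calc Fat.card ≤ ∑ S ∈ M.powersetCard d,
        ((univ : Finset V).filter (fun v => ∀ c ∈ S, G.Adj v c)).card :=
        le_trans (card_le_card hsub) card_biUnion_le
    _ ≤ ∑ S ∈ M.powersetCard d, (d - 1) := Finset.sum_le_sum hclass
    _ = (M.card.choose d) * (d - 1) := by rw [Finset.sum_const, card_powersetCard, smul_eq_mul]
    _ ≤ (M.card + 1) ^ d * d := by
        have h1 : M.card.choose d ≤ (M.card + 1) ^ d :=
          le_trans (Nat.choose_le_pow M.card d) (Nat.pow_le_pow_left (Nat.le_succ _) d)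
        exact Nat.mul_le_mul h1 (by omega)
    _ = d * (M.card + 1) ^ d := Nat.mul_comm _ _

lemma trace_count_aux {V : Type*} [Fintype V] [DecidableEq V] (G : SimpleGraph V)
    [DecidableRel G.Adj] (d : ℕ) (hd : 1 ≤ d) (hfree : BicliqueFree G d) (M : Finset V) :
    ((univ : Finset V).image (fun v => M.filter (fun c => c = v ∨ G.Adj v c))).card
      ≤ (2 * d + 1) * (M.card + 1) ^ d := by
  classical
  set tr : V → Finset V := fun v => M.filter (fun c => c = v ∨ G.Adj v c) with htr
  set TS := (univ : Finset V).image tr with hTS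
  have hsplit : (TS.filter (fun T => T.card ≤ d)).card
      + (TS.filter (fun T => ¬ T.card ≤ d)).card = TS.card :=
    Finset.card_filter_add_card_filter_not (p := fun T : Finset V => T.card ≤ d)
  have hsmall : (TS.filter (fun T => T.card ≤ d)).card ≤ (d + 1) * (M.card + 1) ^ d := by
    have hsub : TS.filter (fun T => T.card ≤ d) ⊆
        (Finset.range (d + 1)).biUnion (fun i => M.powersetCard i) := by
      intro T hT
      obtain ⟨hT1, hT2⟩ := mem_filter.mp hT
      obtain ⟨v, _, rfl⟩ := mem_image.mp hT1
      exact mem_biUnion.mpr ⟨(tr v).card, mem_range.mpr (by omega),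
        mem_powersetCard.mpr ⟨filter_subset _ _, rfl⟩⟩
    calc (TS.filter (fun T => T.card ≤ d)).card
        ≤ ∑ i ∈ Finset.range (d + 1), (M.powersetCard i).card :=
          le_trans (card_le_card hsub) card_biUnion_le
      _ ≤ ∑ i ∈ Finset.range (d + 1), (M.card + 1) ^ d := by
          refine Finset.sum_le_sum (fun i hi => ?_)
          rw [card_powersetCard]
          calc M.card.choose i ≤ M.card ^ i := Nat.choose_le_pow M.card i
            _ ≤ (M.card + 1) ^ i := Nat.pow_le_pow_left (Nat.le_succ _) i
            _ ≤ (M.card + 1) ^ d := Nat.pow_le_pow_right (by omega)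
                (Nat.lt_succ_iff.mp (mem_range.mp hi))
      _ = (d + 1) * (M.card + 1) ^ d := by rw [Finset.sum_const, card_range, smul_eq_mul]
  have hbig : (TS.filter (fun T => ¬ T.card ≤ d)).card ≤ d * (M.card + 1) ^ d := by
    have hsub : TS.filter (fun T => ¬ T.card ≤ d) ⊆
        ((univ : Finset V).filter (fun v => d + 1 ≤ (tr v).card)).image tr := by
      intro T hT
      obtain ⟨hT1, hT2⟩ := mem_filter.mp hT
      obtain ⟨v, _, rfl⟩ := mem_image.mp hT1
      exact mem_image_of_mem tr (mem_filter.mpr ⟨mem_univ _, by omega⟩)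
    calc (TS.filter (fun T => ¬ T.card ≤ d)).card
        ≤ (((univ : Finset V).filter (fun v => d + 1 ≤ (tr v).card)).image tr).card :=
          card_le_card hsub
      _ ≤ ((univ : Finset V).filter (fun v => d + 1 ≤ (tr v).card)).card := card_image_le
      _ ≤ d * (M.card + 1) ^ d := fat_bound_aux G d hd hfree M
  calc TS.card = (TS.filter (fun T => T.card ≤ d)).card
      + (TS.filter (fun T => ¬ T.card ≤ d)).card := hsplit.symm
    _ ≤ (d + 1) * (M.card + 1) ^ d + d * (M.card + 1) ^ d := Nat.add_le_add hsmall hbig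
    _ = (2 * d + 1) * (M.card + 1) ^ d := by ring

end Aux

/-- DSR on `K_{d,d}`-subgraph-free graphs has a kernel: there is a vertex set
`W ⊇ D_s ∪ D_t` of size at most `d*k^d + 2k + 2d*(3*d*k^d)^{2d}` such that there
is a reconfiguration sequence from `D_s` to `D_t` in `G` iff there is one in
`G[W]`, and when such sequences exist, the minimum lengths coincide. -/
theorem dsr_biclique_free_kernel {V : Type*} [Fintype V] [DecidableEq V]
    (G : SimpleGraph V) [DecidableRel G.Adj] (d k : ℕ) (hd : 2 ≤ d) (hk : 1 ≤ k)
    (hfree : BicliqueFree G d)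
    (Ds Dt : Finset V)
    (hDs : DominatesOn G Finset.univ Ds) (hDt : DominatesOn G Finset.univ Dt)
    (hDsCard : Ds.card = k) (hDtCard : Dt.card = k) :
    ∃ W : Finset V, Ds ∪ Dt ⊆ W ∧
      W.card ≤ d * k ^ d + 2 * k + 2 * d * (3 * d * k ^ d) ^ (2 * d) ∧
      ((∃ ℓ σ, IsDSRecSeqOn G Finset.univ k Ds Dt ℓ σ) ↔
       (∃ ℓ σ, IsDSRecSeqOn G W k Ds Dt ℓ σ)) ∧
      ((∃ ℓ σ, IsDSRecSeqOn G Finset.univ k Ds Dt ℓ σ) →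
        sInf {ℓ : ℕ | ∃ σ, IsDSRecSeqOn G Finset.univ k Ds Dt ℓ σ} =
        sInf {ℓ : ℕ | ∃ σ, IsDSRecSeqOn G W k Ds Dt ℓ σ}) := by
  classical
  by_cases hV : Fintype.card V ≤ d * k ^ d + 2 * k + 2 * d * (3 * d * k ^ d) ^ (2 * d)
  · exact ⟨Finset.univ, subset_univ _, by simpa using hV, Iff.rfl, fun _ => rfl⟩
  push_neg at hV
  haveI hVne : Nonempty V := by
    have h1 : 0 < Ds.card := by omega
    obtain ⟨v, _⟩ := Finset.card_pos.mp h1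
    exact ⟨v⟩
  obtain ⟨C, hC0C, hCcard, hcore⟩ := core_exists_aux G d k hfree (Ds ∪ Dt)
  set tr : V → Finset V := fun v => C.filter (fun c => c = v ∨ G.Adj v c) with htr
  set pick : Finset V → V :=
    fun T => if h : ∃ w, tr w = T then h.choose else Classical.arbitrary V with hpick
  have hpick_spec : ∀ v, tr (pick (tr v)) = tr v := by
    intro v
    have h : ∃ w, tr w = tr v := ⟨v, rfl⟩
    simp only [hpick, dif_pos h]
    exact h.choose_spec
  set R := ((univ : Finset V).image tr).image pick with hR
  have hRcard : R.card ≤ (2 * d + 1) * (C.card + 1) ^ d :=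
    le_trans card_image_le (trace_count_aux G d (by omega) hfree C)
  have hkV : k + 2 ≤ Fintype.card V := by
    have h0 : 2 * 1 ≤ d * k ^ d := Nat.mul_le_mul hd (Nat.one_le_pow _ _ hk)
    omega
  obtain ⟨P, hPsub, hPcard⟩ :=
    Finset.exists_subset_card_eq (s := (univ : Finset V)) (n := k + 2) (by simpa using hkV)
  set W := C ∪ R ∪ P with hW
  have hCW : C ⊆ W := Subset.trans subset_union_left subset_union_left
  have hDsW : Ds ⊆ W := Subset.trans (Subset.trans subset_union_left hC0C) hCW
  have hDtW : Dt ⊆ W := Subset.trans (Subset.trans subset_union_right hC0C) hCW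
  have hWge : k + 2 ≤ W.card := by
    have hPW : P ⊆ W := subset_union_right
    have := card_le_card hPW
    omega
  have hWcard : W.card ≤ d * k ^ d + 2 * k + 2 * d * (3 * d * k ^ d) ^ (2 * d) := by
    have h1 : W.card ≤ C.card + R.card + (k + 2) := by
      calc W.card ≤ (C ∪ R).card + P.card := card_union_le _ _
        _ ≤ C.card + R.card + P.card := by
            have := card_union_le C R
            omega
        _ = C.card + R.card + (k + 2) := by rw [hPcard]
    have h2 : C.card ≤ 2 * k + ((d + 3) * k ^ d + 2 * d) := by
      have h3 : (Ds ∪ Dt).card ≤ 2 * k := by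
        have := card_union_le Ds Dt
        omega
      have h4 := hfunAux_le d k hd hk
      omega
    have h5 := kernel_arith_aux d k C.card hd hk h2
    have h6 : C.card + R.card + (k + 2)
        ≤ C.card + (2 * d + 1) * (C.card + 1) ^ d + (k + 2) := by omega
    omega
  set rep : V → V := fun v => if v ∈ W then v else pick (tr v) with hrep
  have hrep_mem : ∀ v, rep v ∈ W := by
    intro v
    rw [hrep]
    by_cases h : v ∈ W
    · simpa [h] using h
    · simp only [if_neg h]
      have hmem : pick (tr v) ∈ R := by
        rw [hR]
        exact mem_image_of_mem pick (mem_image_of_mem tr (mem_univ v))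
      exact (Subset.trans subset_union_right subset_union_left : R ⊆ W) hmem
  have hrep_id : ∀ v ∈ W, rep v = v := fun v hv => if_pos hv
  have hrep_tr : ∀ v, tr (rep v) = tr v := by
    intro v
    rw [hrep]
    by_cases h : v ∈ W
    · simp [h]
    · simp only [if_neg h]
      exact hpick_spec v
  -- lifting: a W-sequence is a univ-sequence
  have hlift : ∀ ℓ (σ : ℕ → Finset V),
      IsDSRecSeqOn G W k Ds Dt ℓ σ → IsDSRecSeqOn G Finset.univ k Ds Dt ℓ σ := by
    rintro ℓ σ ⟨h0, hl, hdom, hstep⟩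
    have hdomC : ∀ i ≤ ℓ, ∀ c ∈ C, c ∈ σ i ∨ ∃ x ∈ σ i, G.Adj x c := by
      intro i hi c hc
      exact (hdom i hi).1.2 c (hCW hc)
    have hdomU : ∀ i ≤ ℓ, ∀ v : V, v ∈ σ i ∨ ∃ x ∈ σ i, G.Adj x v := by
      intro i hi
      rcases Nat.lt_or_ge (σ i).card (k + 1) with hki | hki
      · exact hcore (σ i) (by omega) (hdomC i hi)
      · have hcard1 : (σ i).card = k + 1 := by
          have := (hdom i hi).2.2
          omega
        obtain ⟨j, rfl⟩ : ∃ j, i = j + 1 := by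
          cases i with
          | zero =>
            exfalso
            rw [h0] at hcard1
            omega
          | succ j => exact ⟨j, rfl⟩
        have hjℓ : j < ℓ := by omega
        rcases symmDiff_card_one_aux (hstep j hjℓ) with ⟨x, hx, hins⟩ | ⟨x, hx, hers⟩
        · have hsubj : σ j ⊆ σ (j + 1) := hins ▸ subset_insert x (σ j)
          have hcardj : (σ j).card = k := by
            have h7 : (insert x (σ j)).card = (σ j).card + 1 := card_insert_of_notMem hx
            rw [← hins] at h7
            omega
          have hdomj := hcore (σ j) (le_of_eq hcardj) (hdomC j (by omega))
          intro v
          rcases hdomj v with h1 | ⟨y, hy, hadjy⟩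
          · exact Or.inl (hsubj h1)
          · exact Or.inr ⟨y, hsubj hy, hadjy⟩
        · exfalso
          have h7 : ((σ j).erase x).card = (σ j).card - 1 := card_erase_of_mem hx
          rw [← hers] at h7
          have := (hdom j (by omega)).2.2
          omega
    refine ⟨h0, hl, fun i hi => ⟨⟨subset_univ _, fun w _ => hdomU i hi w⟩, (hdom i hi).2⟩, hstep⟩
  -- projection: a univ-sequence yields a W-sequence of the same length
  have hproj : ∀ ℓ (σ : ℕ → Finset V),
      IsDSRecSeqOn G Finset.univ k Ds Dt ℓ σ →
      ∃ τ, IsDSRecSeqOn G W k Ds Dt ℓ τ := by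
    rintro ℓ σ ⟨h0, hl, hdom, hstep⟩
    have hdomU : ∀ i ≤ ℓ, ∀ v : V, ∃ y ∈ σ i, y = v ∨ G.Adj y v := by
      intro i hi v
      rcases (hdom i hi).1.2 v (mem_univ v) with h1 | ⟨y, hy, ha⟩
      · exact ⟨v, h1, Or.inl rfl⟩
      · exact ⟨y, hy, Or.inr ha⟩
    -- any set containing all reps of σ i dominates C
    have hdomC' : ∀ i ≤ ℓ, ∀ T : Finset V, (∀ v ∈ σ i, rep v ∈ T) →
        ∀ c ∈ C, c ∈ T ∨ ∃ x ∈ T, G.Adj x c := by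
      intro i hi T hT c hc
      obtain ⟨y, hy, hyc⟩ := hdomU i hi c
      have hcy : c ∈ tr y := by
        rw [htr]
        refine mem_filter.mpr ⟨hc, ?_⟩
        rcases hyc with h1 | h1
        · exact Or.inl h1.symm
        · exact Or.inr h1
      rw [← hrep_tr y] at hcy
      have h2 := (mem_filter.mp hcy).2
      rcases h2 with h1 | h1
      · exact Or.inl (h1 ▸ hT y hy)
      · exact Or.inr ⟨rep y, hT y hy, h1⟩
    have main : ∀ j ≤ ℓ, ∃ τ : ℕ → Finset V, τ 0 = Ds ∧
        (∀ i ≤ j, τ i ⊆ W ∧ (τ i).card = (σ i).card ∧ (∀ v ∈ σ i, rep v ∈ τ i) ∧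
          (∀ w : V, w ∈ τ i ∨ ∃ x ∈ τ i, G.Adj x w)) ∧
        (∀ i < j, (symmDiff (τ i) (τ (i + 1))).card = 1) := by
      intro j
      induction j with
      | zero =>
        intro _
        refine ⟨fun _ => Ds, rfl, ?_, fun i hi => absurd hi (Nat.not_lt_zero i)⟩
        intro i hi
        have hi0 : i = 0 := Nat.le_zero.mp hi
        subst hi0
        refine ⟨hDsW, by rw [h0], ?_, ?_⟩
        · intro v hv
          rw [h0] at hv
          rw [hrep_id v (hDsW hv)]
          exact hv
        · intro w
          exact hDs.2 w (mem_univ w)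
      | succ j ih =>
        intro hj1
        obtain ⟨τ, hτ0, hInvs, hsteps⟩ := ih (by omega)
        have hjℓ : j < ℓ := by omega
        obtain ⟨hTW, hTcard, hTrep, hTdom⟩ := hInvs j le_rfl
        rcases symmDiff_card_one_aux (hstep j hjℓ) with ⟨x, hx, hins⟩ | ⟨x, hx, hers⟩
        · -- add step
          have hWne : (W \ τ j).Nonempty := by
            rw [Finset.sdiff_nonempty]
            intro hsubW
            have h1 := card_le_card hsubW
            have h2 := (hdom j (le_of_lt hjℓ)).2.2
            omega
          set y := if rep x ∈ τ j then hWne.choose else rep x with hy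
          have hyW : y ∈ W := by
            rw [hy]
            split
            · exact (mem_sdiff.mp hWne.choose_spec).1
            · exact hrep_mem x
          have hyT : y ∉ τ j := by
            rw [hy]
            split
            · exact (mem_sdiff.mp hWne.choose_spec).2
            · next h => exact h
          refine ⟨Function.update τ (j + 1) (insert y (τ j)), ?_, ?_, ?_⟩
          · rw [Function.update_of_ne (by omega : (0 : ℕ) ≠ j + 1)]
            exact hτ0
          · intro i hi
            by_cases hij : i = j + 1
            · subst hij
              rw [Function.update_self]
              refine ⟨insert_subset hyW hTW, ?_, ?_, ?_⟩
              · rw [card_insert_of_notMem hyT, hins, card_insert_of_notMem hx, hTcard]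
              · intro v hv
                rw [hins] at hv
                rcases mem_insert.mp hv with rfl | hv'
                · rw [hy]
                  split
                  · next h => exact mem_insert_of_mem h
                  · exact mem_insert_self _ _
                · exact mem_insert_of_mem (hTrep v hv')
              · intro w
                rcases hTdom w with h1 | ⟨z, hz, ha⟩
                · exact Or.inl (mem_insert_of_mem h1)
                · exact Or.inr ⟨z, mem_insert_of_mem hz, ha⟩
            · have hij' : i ≤ j := by omega
              rw [Function.update_of_ne hij]
              exact hInvs i hij'
          · intro i hi
            by_cases hij : i = j
            · subst hij
              rw [Function.update_of_ne (Nat.lt_succ_self _).ne, Function.update_self]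
              exact card_symmDiff_insert_aux hyT
            · have h1 : i ≠ j + 1 := by omega
              have h2 : i + 1 ≠ j + 1 := by omega
              rw [Function.update_of_ne h1, Function.update_of_ne h2]
              exact hsteps i (by omega)
        · -- erase step
          have hσsub : σ (j + 1) ⊆ σ j := by
            rw [hers]
            exact erase_subset x (σ j)
          have hσcard : (σ (j + 1)).card = (σ j).card - 1 := by
            rw [hers]
            exact card_erase_of_mem hx
          have hσpos : 0 < (σ j).card := by
            have := (hdom j (by omega)).2.1
            omega
          have hne : (τ j \ (σ (j + 1)).image rep).Nonempty := by
            rw [Finset.sdiff_nonempty]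
            intro hsubW
            have h1 := card_le_card hsubW
            have h2 := Finset.card_image_le (s := σ (j + 1)) (f := rep)
            omega
          set w := hne.choose with hwdef
          have hwT : w ∈ τ j := (mem_sdiff.mp hne.choose_spec).1
          have hwR : w ∉ (σ (j + 1)).image rep := (mem_sdiff.mp hne.choose_spec).2
          have hrepmem : ∀ v ∈ σ (j + 1), rep v ∈ (τ j).erase w := by
            intro v hv
            refine mem_erase.mpr ⟨?_, hTrep v (hσsub hv)⟩
            intro heq
            exact hwR (heq ▸ mem_image_of_mem rep hv)
          have hcardnew : ((τ j).erase w).card = (σ (j + 1)).card := by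
            rw [card_erase_of_mem hwT, hTcard]
            omega
          have hknew : ((τ j).erase w).card ≤ k := by
            rw [hcardnew]
            have h2 : (σ j).card ≤ k + 1 := (hdom j (le_of_lt hjℓ)).2.2
            omega
          have hdomnew : ∀ v : V, v ∈ (τ j).erase w ∨ ∃ x ∈ (τ j).erase w, G.Adj x v :=
            hcore _ hknew (hdomC' (j + 1) (by omega) _ hrepmem)
          refine ⟨Function.update τ (j + 1) ((τ j).erase w), ?_, ?_, ?_⟩
          · rw [Function.update_of_ne (by omega : (0 : ℕ) ≠ j + 1)]
            exact hτ0
          · intro i hi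
            by_cases hij : i = j + 1
            · subst hij
              rw [Function.update_self]
              exact ⟨Subset.trans (erase_subset _ _) hTW, hcardnew, hrepmem, hdomnew⟩
            · have hij' : i ≤ j := by omega
              rw [Function.update_of_ne hij]
              exact hInvs i hij'
          · intro i hi
            by_cases hij : i = j
            · subst hij
              rw [Function.update_of_ne (Nat.lt_succ_self _).ne, Function.update_self]
              exact card_symmDiff_erase_aux hwT
            · have h1 : i ≠ j + 1 := by omega
              have h2 : i + 1 ≠ j + 1 := by omega
              rw [Function.update_of_ne h1, Function.update_of_ne h2]
              exact hsteps i (by omega)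
    obtain ⟨τ, hτ0, hInvs, hsteps⟩ := main ℓ le_rfl
    obtain ⟨hTW, hTcard, hTrep, hTdom⟩ := hInvs ℓ le_rfl
    refine ⟨τ, hτ0, ?_, ?_, hsteps⟩
    · have hsubT : Dt ⊆ τ ℓ := by
        intro v hv
        have h1 := hTrep v (hl ▸ hv : v ∈ σ ℓ)
        rwa [hrep_id v (hDtW hv)] at h1
      have hcardT : (τ ℓ).card ≤ Dt.card := by
        rw [hTcard, hl]
      exact (Finset.eq_of_subset_of_card_le hsubT hcardT).symm
    · intro i hi
      obtain ⟨hTW', hTcard', hTrep', hTdom'⟩ := hInvs i hi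
      refine ⟨⟨hTW', fun w _ => hTdom' w⟩, ?_, ?_⟩
      · rw [hTcard']
        exact (hdom i hi).2.1
      · rw [hTcard']
        exact (hdom i hi).2.2
  -- conclusion
  have hsets : {ℓ : ℕ | ∃ σ, IsDSRecSeqOn G Finset.univ k Ds Dt ℓ σ}
      = {ℓ : ℕ | ∃ σ, IsDSRecSeqOn G W k Ds Dt ℓ σ} := by
    ext ℓ
    constructor
    · rintro ⟨σ, h⟩
      exact hproj ℓ σ h
    · rintro ⟨σ, h⟩
      exact ⟨σ, hlift ℓ σ h⟩
  refine ⟨W, union_subset hDsW hDtW, hWcard, ?_, ?_⟩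
  · constructor
    · rintro ⟨ℓ, σ, h⟩
      obtain ⟨τ, hτ⟩ := hproj ℓ σ h
      exact ⟨ℓ, τ, hτ⟩
    · rintro ⟨ℓ, σ, h⟩
      exact ⟨ℓ, σ, hlift ℓ σ h⟩
  · intro _
    rw [hsets]
end
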